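/- arXiv:1008.2347 — 2 statements merged into one kernel-verified Lean document; each statement's English description precedes it below -/
import Mathlib

section
/- For all ε with 1-√2/2 ≤ ε ≤ 1/2, the quantity (ε/(1-ε))·(3/4 - ε + ε/(4(2-ε))) + 3/4 - ε/(4(2-ε)) is at least 0.914. -/
theorem stmt_10 (ε : ℝ) (h0 : 1 - Real.sqrt 2 / 2 ≤ ε) (h1 : ε ≤ 1/2) :
    ε/(1 - ε) * (3/4 - ε + ε/(4*(2 - ε))) + 3/4 - ε/(4*(2 - ε)) ≥ 0.914 := by
  have hs2 : Real.sqrt 2 ^ 2 = 2 := Real.sq_sqrt (by norm_num)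
  have hsl : (1.41421 : ℝ) ≤ Real.sqrt 2 := by
    nlinarith [Real.sqrt_nonneg 2, hs2]
  have hsu : Real.sqrt 2 ≤ 1.41422 := by
    nlinarith [Real.sqrt_nonneg 2, hs2]
  have he0 : (0.29289 : ℝ) ≤ ε := by nlinarith
  have h1e : (0:ℝ) < 1 - ε := by linarith
  have h2e : (0:ℝ) < 2 - ε := by linarith
  rw [ge_iff_le, ← sub_nonneg]
  have h : ε/(1 - ε) * (3/4 - ε + ε/(4*(2 - ε))) + 3/4 - ε/(4*(2 - ε)) - 0.914 =
      (ε * ((3/4 - ε)*(4*(2-ε)) + ε) + (3/4 - 0.914)*(4*(1-ε)*(2-ε)) - ε*(1-ε)) /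
      (4*(1-ε)*(2-ε)) := by
    field_simp
    ring
  rw [h]
  apply div_nonneg _ (by positivity)
  nlinarith [sq_nonneg (ε - 0.29289), sq_nonneg (ε - 0.5), mul_pos h1e h2e]
end

section
/- For ε < 1-√2/2, the point ((1-ε)²/4, (2-ε)/4) does not lie in the convex hull of the points (0, 1/2), ((1-ε)(3-2ε)/(4(2-ε)), (3-2ε)/(4(2-ε))), ((3-2ε)/(4(2-ε)), (1-ε)(3-2ε)/(4(2-ε))), and (1/2, 0). -/
/-!
Write `k = (1 - ε)(3 - 2ε)`. The line `x + k y = k / 2` passes through the first two vertices,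
and for `0 ≤ ε ≤ 1/2` the other two vertices lie below it, so the whole hull lies in the
half-plane `x + k y ≤ k / 2`. At the given point, `4 (x + k y) - 2 k = (1 - ε)(2 (1 - ε)² - 1)`,
which is positive exactly when `1 - ε > √2 / 2`.
-/

theorem notMem_convexHull_of_le_of_lt {𝕜 E β : Type*} [Semiring 𝕜] [PartialOrder 𝕜]
    [AddCommMonoid E] [Module 𝕜 E] [AddCommMonoid β] [PartialOrder β] [IsOrderedAddMonoid β]
    [Module 𝕜 β] [PosSMulMono 𝕜 β] {s : Set E} {x : E} (f : E →ₗ[𝕜] β) {c : β}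
    (hs : ∀ y ∈ s, f y ≤ c) (hx : c < f x) : x ∉ convexHull 𝕜 s := fun h =>
  hx.not_ge (convexHull_min hs ((convex_Iic c).linear_preimage f) h)

def weightedSum (k : ℝ) : ℝ × ℝ →ₗ[ℝ] ℝ := LinearMap.fst ℝ ℝ ℝ + k • LinearMap.snd ℝ ℝ ℝ

@[simp]
theorem weightedSum_apply (k : ℝ) (p : ℝ × ℝ) : weightedSum k p = p.1 + k * p.2 := rfl

section

variable {ε : ℝ}

theorem weightedSum_le_of_mem_vertices (h0 : 0 ≤ ε) (h1 : ε ≤ 1 / 2) :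
    ∀ p ∈ ({((0:ℝ), (1/2:ℝ)),
        ((1 - ε) * (3 - 2*ε) / (4 * (2 - ε)), (3 - 2*ε) / (4 * (2 - ε))),
        ((3 - 2*ε) / (4 * (2 - ε)), (1 - ε) * (3 - 2*ε) / (4 * (2 - ε))),
        ((1/2:ℝ), (0:ℝ))} : Set (ℝ × ℝ)),
      weightedSum ((1 - ε) * (3 - 2*ε)) p ≤ (1 - ε) * (3 - 2*ε) / 2 := by
  have h2ε : 0 < 2 - ε := by linarith
  rintro p (rfl | rfl | rfl | rfl) <;> simp only [weightedSum_apply]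
  · linarith
  · refine le_of_eq ?_
    field_simp
    ring
  · -- with `a = 1 - ε` this is `(2a - 1)(a² - 1) ≤ 0`
    have key : 1 + (1 - ε) ^ 2 * (3 - 2 * ε) ≤ 2 * (1 - ε) * (2 - ε) := by
      nlinarith [mul_nonneg (mul_nonneg (by linarith : (0:ℝ) ≤ 1 - 2 * ε) h0) h2ε.le]
    calc _ = (3 - 2 * ε) * (1 + (1 - ε) ^ 2 * (3 - 2 * ε)) / (4 * (2 - ε)) := by ring
      _ ≤ (3 - 2 * ε) * (2 * (1 - ε) * (2 - ε)) / (4 * (2 - ε)) := by gcongr; linarith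
      _ = _ := by field_simp; ring
  · nlinarith

theorem lt_weightedSum_of_lt_one_sub_sqrt_two_div_two (h1 : ε < 1 - √2 / 2) :
    (1 - ε) * (3 - 2*ε) / 2 < weightedSum ((1 - ε) * (3 - 2*ε)) ((1 - ε)^2 / 4, (2 - ε) / 4) := by
  have ha : 0 < 1 - ε := by linarith [Real.sqrt_nonneg 2]
  have hsq : 1 < 2 * (1 - ε) ^ 2 := by
    nlinarith [Real.sq_sqrt (show (0:ℝ) ≤ 2 by norm_num), Real.sqrt_nonneg 2]
  simp only [weightedSum_apply]
  nlinarith [mul_pos ha (sub_pos.2 hsq)]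

end

theorem stmt_14 (ε : ℝ) (h0 : 0 < ε) (h1 : ε < 1 - Real.sqrt 2 / 2) :
    (((1 - ε)^2 / 4, (2 - ε) / 4) : ℝ × ℝ) ∉
      convexHull ℝ ({((0:ℝ), (1/2:ℝ)),
        ((1 - ε) * (3 - 2*ε) / (4 * (2 - ε)), (3 - 2*ε) / (4 * (2 - ε))),
        ((3 - 2*ε) / (4 * (2 - ε)), (1 - ε) * (3 - 2*ε) / (4 * (2 - ε))),
        ((1/2:ℝ), (0:ℝ))} : Set (ℝ × ℝ)) := by
  have hε : ε ≤ 1 / 2 := by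
    nlinarith [Real.sq_sqrt (show (0:ℝ) ≤ 2 by norm_num), Real.sqrt_nonneg 2]
  exact notMem_convexHull_of_le_of_lt _ (weightedSum_le_of_mem_vertices h0.le hε)
    (lt_weightedSum_of_lt_one_sub_sqrt_two_div_two h1)
end
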